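/- arXiv:2408.09938 — 7 statements merged into one kernel-verified Lean document; each statement's English description precedes it below -/
import Mathlib

section
/- Let A ∈ {0,*}^{n×n} and B ∈ {0,*}^{n×q} be patterns with B having generic full column rank q. Then the minimum of ||C||_0 over output patterns C ∈ {0,*}^{n×n} such that (A,B,C) is GSIO and every row of C has at most one free entry (dedicated sensors) is equal to the minimum of ||C||_0 over all output patterns C ∈ {0,*}^{n×n} such that (A,B,C) is GSIO (no dedicated-row restriction). (Problems 𝒫 and 𝒫′ have the same optimal value.) -/
/-- The realization of a structured pattern (a set of free positions) determined by an
assignment `v` of complex values to its free entries: the matrix vanishes outside the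
free positions. -/
def Pattern.realize {a b : Type*} [DecidableEq a] [DecidableEq b] (P : Finset (a × b)) (v : {e // e ∈ P} → ℂ) :
    Matrix a b ℂ :=
  Matrix.of fun i j => if h : (i, j) ∈ P then v ⟨(i, j), h⟩ else 0

/-- The structured system `(A, B, C)` (with zero feedthrough) is generically state and
input observable (GSIO): there is a nonzero polynomial in the free entries of the
patterns such that every realization at which it does not vanish has a Rosenbrock
matrix `[[Ã - s I, B̃], [C̃, 0]]` of full column rank `n + q` for every `s ∈ ℂ`. -/
def IsGSIO {n q m : ℕ} (A : Finset (Fin n × Fin n)) (B : Finset (Fin n × Fin q))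
    (C : Finset (Fin m × Fin n)) : Prop :=
  ∃ p : MvPolynomial (({e // e ∈ A} ⊕ {e // e ∈ B}) ⊕ {e // e ∈ C}) ℂ, p ≠ 0 ∧
    ∀ v : (({e // e ∈ A} ⊕ {e // e ∈ B}) ⊕ {e // e ∈ C}) → ℂ,
      MvPolynomial.eval v p ≠ 0 → ∀ s : ℂ,
        (Matrix.fromBlocks
            (Pattern.realize A (fun e => v (Sum.inl (Sum.inl e))) -
              s • (1 : Matrix (Fin n) (Fin n) ℂ))
            (Pattern.realize B (fun e => v (Sum.inl (Sum.inr e))))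
            (Pattern.realize C (fun e => v (Sum.inr e))) 0).rank = n + q

/-!
Trading an output pattern `C` for the diagonal pattern on the set of columns of `C` keeps GSIO and
does not increase the number of free entries. Indeed, a realization of that diagonal pattern with
nonzero entries has exactly the vectors vanishing on those columns as its kernel, and these are
killed by every realization of `C`; so whenever the Rosenbrock matrix with some realization of `C`
has trivial kernel, so does the one with the diagonal pattern. Genericity is witnessed by the product
of the diagonal entries times the GSIO polynomial of `(A, B, C)` with its `C`-variables frozen at a
point where it does not vanish.
-/

open Matrix

theorem Matrix.rank_eq_card_width_iff {m n K : Type*} [Fintype n] [Field K]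
    (M : Matrix m n K) : M.rank = Fintype.card n ↔ ∀ x, M *ᵥ x = 0 → x = 0 := by
  rw [rank_eq_finrank_span_cols, eq_comm]
  refine (linearIndependent_iff_card_eq_finrank_span (b := M.col)).symm.trans ?_
  rw [← mulVec_injective_iff, ← coe_mulVecLin, injective_iff_map_eq_zero]

theorem Matrix.eq_zero_of_fromBlocks_zero_mulVec_eq_zero {l m n p p' K : Type*}
    [Fintype l] [Fintype n] [Field K]
    (X : Matrix m n K) (Y : Matrix m l K) {C : Matrix p n K} {C' : Matrix p' n K}
    (hker : ∀ x, C' *ᵥ x = 0 → C *ᵥ x = 0)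
    (h : ∀ x, fromBlocks X Y C 0 *ᵥ x = 0 → x = 0) (x : n ⊕ l → K)
    (hx : fromBlocks X Y C' 0 *ᵥ x = 0) : x = 0 := by
  apply h
  rw [← Sum.elim_comp_inl_inr x, fromBlocks_mulVec] at hx ⊢
  simp only [Sum.elim_comp_inl, Sum.elim_comp_inr, zero_mulVec, add_zero] at hx ⊢
  rw [← Sum.elim_zero_zero, Sum.elim_eq_iff] at hx ⊢
  exact ⟨hx.1, hker _ hx.2⟩

open MvPolynomial in
theorem MvPolynomial.eval_bind₁_sumElim_X_C {R σ τ : Type*} [CommSemiring R] (w : σ → R) (c : τ → R)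
    (p : MvPolynomial (σ ⊕ τ) R) :
    eval w (bind₁ (Sum.elim X (fun t => C (c t))) p) = eval (Sum.elim w c) p := by
  show eval₂Hom (RingHom.id R) w _ = _
  rw [eval₂Hom_bind₁]
  congr 2
  funext i; cases i <;> simp

theorem MvPolynomial.exists_bind₁_sumElim_X_C_ne_zero {R σ τ : Type*} [CommRing R] [IsDomain R]
    [Infinite R] {p : MvPolynomial (σ ⊕ τ) R} (hp : p ≠ 0) :
    ∃ c : τ → R, bind₁ (Sum.elim X fun t => C (c t)) p ≠ 0 := by
  obtain ⟨v, hv⟩ : ∃ v, eval v p ≠ 0 := by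
    by_contra! h
    exact hp (funext fun v => by simpa using h v)
  refine ⟨v ∘ Sum.inr, fun h0 => hv ?_⟩
  have := congrArg (eval (v ∘ Sum.inl)) h0
  rwa [eval_bind₁_sumElim_X_C, Sum.elim_comp_inl_inr, map_zero] at this

namespace Pattern

variable {a b : Type*} [DecidableEq a] [DecidableEq b]

theorem realize_apply_of_notMem {P : Finset (a × b)} (v : {e // e ∈ P} → ℂ) {i : a} {j : b}
    (h : (i, j) ∉ P) : realize P v i j = 0 := by
  simp [realize, h]

theorem realize_mulVec_eq_zero [Fintype b] {P : Finset (a × b)} (v : {e // e ∈ P} → ℂ)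
    {x : b → ℂ} (hx : ∀ j ∈ P.image Prod.snd, x j = 0) : realize P v *ᵥ x = 0 := by
  funext i
  refine Finset.sum_eq_zero fun j _ => ?_
  by_cases hij : (i, j) ∈ P
  · rw [hx j (Finset.mem_image_of_mem _ hij), mul_zero]
  · exact mul_eq_zero_of_left (realize_apply_of_notMem v hij) _

def diag (S : Finset b) : Finset (b × b) :=
  S.image fun j => (j, j)

theorem card_diag (S : Finset b) : (diag S).card = S.card :=
  Finset.card_image_of_injective _ fun _ _ h => (Prod.mk.inj h).1

theorem card_filter_fst_diag_le_one (S : Finset b) (i : b) :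
    ((diag S).filter fun e => e.1 = i).card ≤ 1 := by
  refine Finset.card_le_one.2 fun e he e' he' => ?_
  simp only [diag, Finset.mem_filter, Finset.mem_image] at he he'
  obtain ⟨⟨j, -, rfl⟩, rfl⟩ := he
  obtain ⟨⟨j', -, rfl⟩, rfl⟩ := he'
  rfl

theorem eq_zero_of_realize_diag_mulVec_eq_zero [Fintype b] {S : Finset b}
    {d : {e // e ∈ diag S} → ℂ} (hd : ∀ e, d e ≠ 0) {x : b → ℂ}
    (hx : realize (diag S) d *ᵥ x = 0) {j : b} (hj : j ∈ S) : x j = 0 := by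
  have hjj : (j, j) ∈ diag S := Finset.mem_image_of_mem _ hj
  have hrow : (realize (diag S) d *ᵥ x) j = d ⟨(j, j), hjj⟩ * x j := by
    refine (Finset.sum_eq_single j (fun k _ hkj => ?_) (by simp)).trans (by simp [realize, hjj])
    refine mul_eq_zero_of_left (realize_apply_of_notMem d ?_) _
    simp only [diag, Finset.mem_image, Prod.mk.injEq]
    rintro ⟨_, -, rfl, rfl⟩
    exact hkj rfl
  exact (mul_eq_zero.1 (hrow.symm.trans (congrFun hx j))).resolve_left (hd _)

theorem realize_mulVec_eq_zero_of_realize_diag_mulVec_eq_zero [Fintype b] {P : Finset (a × b)}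
    (v : {e // e ∈ P} → ℂ) {d : {e // e ∈ diag (P.image Prod.snd)} → ℂ} (hd : ∀ e, d e ≠ 0)
    {x : b → ℂ} (hx : realize (diag (P.image Prod.snd)) d *ᵥ x = 0) : realize P v *ᵥ x = 0 :=
  realize_mulVec_eq_zero v fun _ => eq_zero_of_realize_diag_mulVec_eq_zero hd hx

end Pattern

open MvPolynomial in
theorem IsGSIO.diag_image_snd {n q m : ℕ} {A : Finset (Fin n × Fin n)} {B : Finset (Fin n × Fin q)}
    {C : Finset (Fin m × Fin n)} (h : IsGSIO A B C) :
    IsGSIO A B (Pattern.diag (C.image Prod.snd)) := by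
  obtain ⟨p, hp0, hp⟩ := h
  obtain ⟨c, hc⟩ := exists_bind₁_sumElim_X_C_ne_zero hp0
  set g := bind₁ (Sum.elim X fun t => MvPolynomial.C (c t)) p
  refine ⟨rename Sum.inl g * ∏ e, X (Sum.inr e),
    mul_ne_zero ((map_ne_zero_iff _ (rename_injective _ Sum.inl_injective)).2 hc)
      (Finset.prod_ne_zero_iff.2 fun e _ => X_ne_zero _), fun v hv s => ?_⟩
  simp only [map_mul, map_prod, eval_rename, eval_X, mul_ne_zero_iff, Finset.prod_ne_zero_iff,
    Finset.mem_univ, true_implies] at hv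
  have hfull := hp (Sum.elim (v ∘ Sum.inl) c) (by rw [← eval_bind₁_sumElim_X_C]; exact hv.1) s
  have hcard : n + q = Fintype.card (Fin n ⊕ Fin q) := by simp
  rw [hcard, rank_eq_card_width_iff] at hfull ⊢
  exact eq_zero_of_fromBlocks_zero_mulVec_eq_zero _ _
    (fun x => Pattern.realize_mulVec_eq_zero_of_realize_diag_mulVec_eq_zero _ hv.2) hfull

theorem dedicated_and_sparsest_GSIO_same_optimum_general (n q : ℕ)
    (A : Finset (Fin n × Fin n)) (B : Finset (Fin n × Fin q)) :
    sInf {k : ℕ | ∃ C : Finset (Fin n × Fin n), C.card = k ∧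
        (∀ i : Fin n, (C.filter fun e => e.1 = i).card ≤ 1) ∧ IsGSIO A B C} =
    sInf {k : ℕ | ∃ C : Finset (Fin n × Fin n), C.card = k ∧ IsGSIO A B C} := by
  refine csInf_eq_csInf_of_forall_exists_le ?_ ?_
  · rintro k ⟨C, rfl, -, hC⟩
    exact ⟨C.card, ⟨C, rfl, hC⟩, le_rfl⟩
  · rintro k ⟨C, rfl, hC⟩
    exact ⟨_, ⟨_, rfl, Pattern.card_filter_fst_diag_le_one _, hC.diag_image_snd⟩,
      (Pattern.card_diag _).trans_le Finset.card_image_le⟩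

/-- Problems 𝒫 (dedicated sensors: every row of `C` has at most one free entry) and 𝒫′
(arbitrary output patterns) have the same optimal value, provided the input pattern `B`
has generic full column rank `q`. -/
theorem dedicated_and_sparsest_GSIO_same_optimum (n q : ℕ)
    (A : Finset (Fin n × Fin n)) (B : Finset (Fin n × Fin q))
    (hB : ∃ Bm : Matrix (Fin n) (Fin q) ℂ,
      (∀ i j, (i, j) ∉ B → Bm i j = 0) ∧ Bm.rank = q) :
    sInf {k : ℕ | ∃ C : Finset (Fin n × Fin n), C.card = k ∧
        (∀ i : Fin n, (C.filter fun e => e.1 = i).card ≤ 1) ∧ IsGSIO A B C} =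
    sInf {k : ℕ | ∃ C : Finset (Fin n × Fin n), C.card = k ∧ IsGSIO A B C} :=
  dedicated_and_sparsest_GSIO_same_optimum_general n q A B
end

section
/- Let A ∈ {0,*}^{n×n} and let B ∈ {0,*}^{n×q} be a dedicated input pattern. Let H(Â) be the minimum number of dedicated sensors making the auxiliary pattern Â structurally observable. Then the minimum number of dedicated sensors C (rows each with exactly one free entry, measuring states) such that (A,B,C) is GSIO lies in the integer interval [H(Â), H(Â)+q]. -/
/-- The structured pair `(M, C)` is structurally observable: there is a nonzero
polynomial in the free entries such that every realization at which it does not vanish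
has `[M̃ - s I; C̃]` of full column rank for every `s ∈ ℂ`. -/
def IsStructObs {ι : Type*} [Fintype ι] [DecidableEq ι] {m : ℕ}
    (M : Finset (ι × ι)) (C : Finset (Fin m × ι)) : Prop :=
  ∃ p : MvPolynomial ({e // e ∈ M} ⊕ {e // e ∈ C}) ℂ, p ≠ 0 ∧
    ∀ v : ({e // e ∈ M} ⊕ {e // e ∈ C}) → ℂ,
      MvPolynomial.eval v p ≠ 0 → ∀ s : ℂ,
        (Matrix.fromRows
            (Pattern.realize M (fun e => v (Sum.inl e)) - s • (1 : Matrix ι ι ℂ))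
            (Pattern.realize C (fun e => v (Sum.inr e)))).rank = Fintype.card ι

/-- `Hmin M` is the minimum number of dedicated sensors (rows each having exactly one
free entry) in an output pattern `C` making the pair `(M, C)` structurally observable. -/
noncomputable def Hmin {ι : Type*} [Fintype ι] [DecidableEq ι] (M : Finset (ι × ι)) : ℕ :=
  sInf {k : ℕ | ∃ C : Finset (Fin k × ι),
    (∀ i : Fin k, ∃! j : ι, (i, j) ∈ C) ∧ IsStructObs M C}

/-- The auxiliary pattern `Â = [[A', B], [0, 0]]` on the index type `Fin n ⊕ Fin q`
(states together with inputs viewed as extra state vertices), where `A'` equals `A`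
except that every row of `A` indexed by the set `I` of input-driven states is set to
zero. -/
def auxPattern {n q : ℕ} (A : Finset (Fin n × Fin n)) (B : Finset (Fin n × Fin q))
    (I : Finset (Fin n)) : Finset ((Fin n ⊕ Fin q) × (Fin n ⊕ Fin q)) :=
  ((A.filter fun e => e.1 ∉ I).image fun e => (Sum.inl e.1, Sum.inl e.2)) ∪
    (B.image fun e => (Sum.inl e.1, Sum.inr e.2))


/-!
With dedicated inputs, input `j` enters only the equation of state `f j`, with a coefficient
`b j` that is generically nonzero. In the Rosenbrock kernel equation `(Ã - s) x + B̃ u = 0` the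
rows `f j` therefore only determine `u`, and `(x, u)` is a kernel vector exactly when `x`
satisfies the rows outside the range `I` of `f` and is not seen by the sensors. In `Â` the rows
`I` of `A` are deleted and the input vertex `j` feeds `f j`; a kernel vector `(x, y)` of
`[Â - s; Ĉ]` again satisfies the rows outside `I`, and the rows `f j` only fix
`y j = s x (f j) / b j`.

Hence the sensors of a GSIO placement make `Â` observable, which gives `H(Â) ≤ min`.
Conversely, take a placement making `Â` observable, move each sensor on an input vertex `j` to
the state `f j`, and add one sensor on every `f j`. A Rosenbrock kernel vector `(x, u)` then has
`x (f j) = 0`, so `(x, 0)` is a kernel vector of the pencil of `Â`, whence `x = 0` and `u = 0`.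

Genericity is transported along the injective correspondence between free entries of `Â` and of
`(A, B)`; the entries of `A` in the rows `I`, which have no counterpart, are frozen at a point
where the defining polynomial does not vanish.
-/

open Function Matrix

/-- `IsGSIO` and `IsStructObs` are, by definition, instances of this notion. -/
def HoldsGenerically {σ : Type*} (P : (σ → ℂ) → Prop) : Prop :=
  ∃ p : MvPolynomial σ ℂ, p ≠ 0 ∧ ∀ v, MvPolynomial.eval v p ≠ 0 → P v

namespace HoldsGenerically

open MvPolynomial

variable {σ τ : Type*} {P Q : (σ → ℂ) → Prop}

theorem mono (h : HoldsGenerically P) (hPQ : ∀ v, P v → Q v) : HoldsGenerically Q :=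
  let ⟨p, hp, hP⟩ := h
  ⟨p, hp, fun v hv => hPQ v (hP v hv)⟩

theorem and (hP : HoldsGenerically P) (hQ : HoldsGenerically Q) :
    HoldsGenerically fun v => P v ∧ Q v := by
  obtain ⟨p, hp, hP⟩ := hP
  obtain ⟨q, hq, hQ⟩ := hQ
  refine ⟨p * q, mul_ne_zero hp hq, fun v hv => ?_⟩
  rw [map_mul] at hv
  exact ⟨hP v (left_ne_zero_of_mul hv), hQ v (right_ne_zero_of_mul hv)⟩

theorem comp (h : HoldsGenerically P) {ι : σ → τ} (hι : Injective ι) :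
    HoldsGenerically fun v : τ → ℂ => P (v ∘ ι) := by
  obtain ⟨p, hp, hP⟩ := h
  refine ⟨rename ι p, (map_ne_zero_iff _ (rename_injective ι hι)).2 hp, fun v hv => hP _ ?_⟩
  rwa [eval_rename] at hv

theorem exists_extend {P : (τ → ℂ) → Prop} (h : HoldsGenerically P) {ι : σ → τ}
    (hι : Injective ι) : ∃ c : τ → ℂ, HoldsGenerically fun w : σ → ℂ => P (extend ι w c) := by
  obtain ⟨p, hp, hP⟩ := h
  obtain ⟨c, hc⟩ : ∃ c, eval c p ≠ 0 := by
    by_contra! h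
    exact hp (MvPolynomial.funext fun c => by simpa using h c)
  -- `p` with the variables outside the range of `ι` frozen at `c`
  set p' := bind₁ (extend ι X (C ∘ c)) p
  have eval_p' : ∀ w, eval w p' = eval (extend ι w c) p := by
    intro w
    change eval₂Hom _ w _ = _
    rw [eval₂Hom_bind₁]
    congr 2
    funext t
    rw [apply_extend (eval₂Hom _ w)]
    congr 1 <;> funext <;> simp
  have extend_self : extend ι (c ∘ ι) c = c := by
    funext t
    by_cases ht : ∃ s, ι s = t
    · obtain ⟨s, rfl⟩ := ht
      exact hι.extend_apply _ _ s
    · exact extend_apply' _ _ _ ht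
  refine ⟨c, p', fun hp' => hc ?_, fun w hw => hP _ ?_⟩
  · rw [← extend_self, ← eval_p', hp', map_zero]
  · rwa [← eval_p']

end HoldsGenerically

theorem holdsGenerically_forall_ne_zero {σ : Type*} [Fintype σ] :
    HoldsGenerically fun v : σ → ℂ => ∀ i, v i ≠ 0 := by
  refine ⟨∏ i, MvPolynomial.X i, Finset.prod_ne_zero_iff.2 fun i _ => MvPolynomial.X_ne_zero i,
    fun v hv i => ?_⟩
  rw [map_prod] at hv
  simpa using Finset.prod_ne_zero_iff.1 hv i (Finset.mem_univ i)

theorem Matrix.rank_eq_card_iff {K m n : Type*} [Field K] [Fintype m] [Fintype n]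
    [DecidableEq n] (A : Matrix m n K) :
    A.rank = Fintype.card n ↔ LinearMap.ker A.mulVecLin = ⊥ := by
  rw [← Submodule.finrank_eq_zero, rank]
  have := LinearMap.finrank_range_add_finrank_ker A.mulVecLin
  rw [Module.finrank_fintype_fun_eq_card] at this
  omega

def dedicatedPattern {κ ι : Type*} [Fintype κ] [DecidableEq κ] [DecidableEq ι] (c : κ → ι) :
    Finset (κ × ι) :=
  Finset.univ.image fun i => (i, c i)

section Dedicated

variable {κ ι : Type*} [Fintype κ] [DecidableEq κ] [DecidableEq ι]

@[simp]
theorem mem_dedicatedPattern {c : κ → ι} {i : κ} {j : ι} :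
    (i, j) ∈ dedicatedPattern c ↔ c i = j := by
  simp [dedicatedPattern]

theorem exists_dedicated_iff {P : Finset (κ × ι) → Prop} :
    (∃ C : Finset (κ × ι), (∀ i, ∃! j, (i, j) ∈ C) ∧ P C) ↔
      ∃ c : κ → ι, P (dedicatedPattern c) := by
  constructor
  · rintro ⟨C, hC, hP⟩
    choose c hc hcu using hC
    have hC : C = dedicatedPattern c := by
      ext ⟨i, j⟩
      rw [mem_dedicatedPattern]
      exact ⟨fun h => (hcu i j h).symm, fun h => h ▸ hc i⟩
    exact ⟨c, hC ▸ hP⟩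
  · rintro ⟨c, hP⟩
    exact ⟨_, fun i => ⟨c i, by simp, fun j hj => (mem_dedicatedPattern.1 hj).symm⟩, hP⟩

variable [Fintype ι] {c : κ → ι}

theorem realize_dedicatedPattern_mulVec (v : {e // e ∈ dedicatedPattern c} → ℂ) (x : ι → ℂ) :
    Pattern.realize (dedicatedPattern c) v *ᵥ x = fun i => v ⟨(i, c i), by simp⟩ * x (c i) := by
  funext i
  rw [mulVec, dotProduct, Finset.sum_eq_single (c i)]
  · simp [Pattern.realize]
  · intro j _ hj
    simp [Pattern.realize, Ne.symm hj]
  · simp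

theorem realize_dedicatedPattern_mulVec_eq_zero (v : {e // e ∈ dedicatedPattern c} → ℂ)
    {x : ι → ℂ} (hx : ∀ i, x (c i) = 0) : Pattern.realize (dedicatedPattern c) v *ᵥ x = 0 := by
  simp [realize_dedicatedPattern_mulVec, hx, Pi.zero_def]

theorem realize_dedicatedPattern_mulVec_eq_zero_iff {v : {e // e ∈ dedicatedPattern c} → ℂ}
    (hv : ∀ e, v e ≠ 0) {x : ι → ℂ} :
    Pattern.realize (dedicatedPattern c) v *ᵥ x = 0 ↔ ∀ i, x (c i) = 0 := by
  simp [realize_dedicatedPattern_mulVec, funext_iff, hv]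

end Dedicated

theorem realize_mulVec_eq_extend {ι κ : Type*} [Fintype κ] [DecidableEq ι] [DecidableEq κ]
    {B : Finset (ι × κ)} {f : κ → ι} (hf : Injective f) (hB : ∀ i j, (i, j) ∈ B ↔ i = f j)
    (v : {e // e ∈ B} → ℂ) (u : κ → ℂ) :
    Pattern.realize B v *ᵥ u = extend f (fun j => v ⟨(f j, j), (hB _ _).2 rfl⟩ * u j) 0 := by
  funext i
  by_cases hi : ∃ j, f j = i
  · obtain ⟨j, rfl⟩ := hi
    rw [hf.extend_apply, mulVec, dotProduct, Finset.sum_eq_single j]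
    · simp [Pattern.realize, (hB _ _).2 rfl]
    · intro j' _ hj'
      simp [Pattern.realize, hB, hf.eq_iff, Ne.symm hj']
    · simp
  · rw [extend_apply' _ _ _ hi, mulVec, dotProduct]
    refine Finset.sum_eq_zero fun j _ => ?_
    have hij : (i, j) ∉ B := fun h => hi ⟨j, ((hB _ _).1 h).symm⟩
    simp [Pattern.realize, hij]

theorem eq_zero_of_mulVec_eq_zero_of_eq_extend {ι κ : Type*} [Fintype κ] {f : κ → ι}
    (hf : Injective f) {b : κ → ℂ} (hb : ∀ j, b j ≠ 0) {B : Matrix ι κ ℂ}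
    (hB : ∀ u, B *ᵥ u = extend f (b * u) 0) {u : κ → ℂ} (hu : B *ᵥ u = 0) : u = 0 := by
  funext j
  have := congrFun hu (f j)
  rw [hB, hf.extend_apply, Pi.zero_apply, Pi.mul_apply] at this
  exact (mul_eq_zero.1 this).resolve_left (hb j)

def zeroRows {m n α : Type*} [DecidableEq m] [Zero α] (I : Finset m) (A : Matrix m n α) :
    Matrix m n α :=
  of fun i j => if i ∈ I then 0 else A i j

theorem zeroRows_mulVec {m n : Type*} [DecidableEq m] [Fintype n] (I : Finset m)
    (A : Matrix m n ℂ) (x : n → ℂ) :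
    zeroRows I A *ᵥ x = fun i => if i ∈ I then 0 else (A *ᵥ x) i := by
  funext i
  by_cases hi : i ∈ I <;> simp [zeroRows, mulVec, dotProduct, hi]

section AuxPattern

variable {n q : ℕ} {A : Finset (Fin n × Fin n)} {B : Finset (Fin n × Fin q)} {I : Finset (Fin n)}

@[simp]
theorem inl_inl_mem_auxPattern {i j : Fin n} :
    (Sum.inl i, Sum.inl j) ∈ auxPattern A B I ↔ (i, j) ∈ A ∧ i ∉ I := by
  simp [auxPattern]

@[simp]
theorem inl_inr_mem_auxPattern {i : Fin n} {j : Fin q} :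
    ((Sum.inl i : Fin n ⊕ Fin q), Sum.inr j) ∈ auxPattern A B I ↔ (i, j) ∈ B := by
  simp [auxPattern]

@[simp]
theorem inr_not_mem_auxPattern {i : Fin q} {y : Fin n ⊕ Fin q} :
    (Sum.inr i, y) ∉ auxPattern A B I := by
  simp [auxPattern]

def auxVar : {e // e ∈ auxPattern A B I} → {e // e ∈ A} ⊕ {e // e ∈ B}
  | ⟨(.inl i, .inl j), h⟩ => .inl ⟨(i, j), (inl_inl_mem_auxPattern.1 h).1⟩
  | ⟨(.inl i, .inr j), h⟩ => .inr ⟨(i, j), inl_inr_mem_auxPattern.1 h⟩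
  | ⟨(.inr _, _), h⟩ => absurd h inr_not_mem_auxPattern

theorem auxVar_injective : Injective (auxVar (A := A) (B := B) (I := I)) := by
  have position_auxVar : ∀ e, Sum.elim (fun a => (Sum.inl a.1.1, Sum.inl a.1.2))
      (fun b => (Sum.inl b.1.1, Sum.inr b.1.2)) (auxVar (A := A) (B := B) (I := I) e) = e.1 := by
    rintro ⟨⟨i | i, j | j⟩, h⟩
    · rfl
    · rfl
    · exact absurd h inr_not_mem_auxPattern
    · exact absurd h inr_not_mem_auxPattern
  exact fun e e' he => Subtype.ext (by rw [← position_auxVar e, he, position_auxVar])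

theorem realize_auxPattern (u : {e // e ∈ A} ⊕ {e // e ∈ B} → ℂ) :
    Pattern.realize (auxPattern A B I) (u ∘ auxVar) =
      fromBlocks (zeroRows I (Pattern.realize A (u ∘ Sum.inl)))
        (Pattern.realize B (u ∘ Sum.inr)) 0 0 := by
  ext (i | i) (j | j)
  · by_cases hA : (i, j) ∈ A <;> by_cases hI : i ∈ I <;>
      simp [Pattern.realize, zeroRows, hA, hI, auxVar]
  · by_cases hB : (i, j) ∈ B <;> simp [Pattern.realize, hB, auxVar]
  · simp [Pattern.realize]
  · simp [Pattern.realize]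

end AuxPattern

section Kernel

variable {ι κ μ ν : Type*} [Fintype ι] [Fintype κ] [DecidableEq ι]

theorem fromBlocks_sub_smul_one_mulVec_eq_zero_iff (A : Matrix ι ι ℂ) (B : Matrix ι κ ℂ)
    (C : Matrix μ ι ℂ) (s : ℂ) (x : ι → ℂ) (u : κ → ℂ) :
    fromBlocks (A - s • 1) B C 0 *ᵥ Sum.elim x u = 0 ↔ A *ᵥ x + B *ᵥ u = s • x ∧ C *ᵥ x = 0 := by
  rw [fromBlocks_mulVec, ← Sum.elim_zero_zero, Sum.elim_eq_iff, sub_mulVec, smul_mulVec,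
    one_mulVec, zero_mulVec, add_zero, sub_add_eq_add_sub, sub_eq_zero]
  simp

theorem fromRows_sub_smul_one_mulVec_eq_zero_iff (M : Matrix ι ι ℂ) (C : Matrix μ ι ℂ) (s : ℂ)
    (z : ι → ℂ) : fromRows (M - s • 1) C *ᵥ z = 0 ↔ M *ᵥ z = s • z ∧ C *ᵥ z = 0 := by
  rw [fromRows_mulVec, ← Sum.elim_zero_zero, Sum.elim_eq_iff, sub_mulVec, smul_mulVec, one_mulVec,
    sub_eq_zero]

variable {f : κ → ι} {b : κ → ℂ} {A : Matrix ι ι ℂ} {B : Matrix ι κ ℂ} {C : Matrix μ ι ℂ}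
  {Ĉ : Matrix ν (ι ⊕ κ) ℂ} {s : ℂ}

theorem fromBlocks_zeroRows_mulVec_eq_smul_iff (x : ι → ℂ) (y : κ → ℂ) :
    fromBlocks (zeroRows (Finset.univ.image f) A) B (0 : Matrix κ ι ℂ) 0 *ᵥ Sum.elim x y =
        s • Sum.elim x y ↔
      zeroRows (Finset.univ.image f) A *ᵥ x + B *ᵥ y = s • x ∧ s • y = 0 := by
  have hsmul : s • Sum.elim x y = Sum.elim (s • x) (s • y) := by
    funext i
    cases i <;> rfl
  rw [fromBlocks_mulVec, hsmul, Sum.elim_eq_iff]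
  simp [eq_comm (a := (0 : κ → ℂ))]

variable [DecidableEq κ]

theorem ker_auxPencil_eq_bot_of_ker_rosenbrock_eq_bot (hf : Injective f) (hb : ∀ j, b j ≠ 0)
    (hB : ∀ u, B *ᵥ u = extend f (b * u) 0)
    (hC : ∀ x y, Ĉ *ᵥ Sum.elim x y = 0 → C *ᵥ x = 0)
    (h : LinearMap.ker (fromBlocks (A - s • 1) B C 0).mulVecLin = ⊥) :
    LinearMap.ker (fromRows (fromBlocks (zeroRows (Finset.univ.image f) A) B
      (0 : Matrix κ ι ℂ) 0 - s • 1) Ĉ).mulVecLin = ⊥ := by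
  rw [ker_mulVecLin_eq_bot_iff] at h ⊢
  intro z hz
  rw [← Sum.elim_comp_inl_inr z] at hz ⊢
  set x := z ∘ Sum.inl
  set y := z ∘ Sum.inr
  obtain ⟨hM, hĈ⟩ := (fromRows_sub_smul_one_mulVec_eq_zero_iff _ _ _ _).1 hz
  have hAy := ((fromBlocks_zeroRows_mulVec_eq_smul_iff x y).1 hM).1
  -- the input `u j` absorbs the equation of the input-driven state `f j`
  set u : κ → ℂ := fun j => (s * x (f j) - (A *ᵥ x) (f j)) / b j
  have hAxu : A *ᵥ x + B *ᵥ u = s • x := by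
    funext i
    by_cases hi : ∃ j, f j = i
    · obtain ⟨j, rfl⟩ := hi
      simp [hB, hf.extend_apply, u, mul_div_cancel₀ _ (hb j)]
    · have := congrFun hAy i
      simp_all [zeroRows_mulVec, extend_apply']
  have hxu := h _ ((fromBlocks_sub_smul_one_mulVec_eq_zero_iff _ _ _ _ _ _).2 ⟨hAxu, hC x y hĈ⟩)
  rw [← Sum.elim_zero_zero, Sum.elim_eq_iff] at hxu ⊢
  refine ⟨hxu.1, eq_zero_of_mulVec_eq_zero_of_eq_extend hf hb hB ?_⟩
  simpa [hxu.1] using hAy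

theorem ker_rosenbrock_eq_bot_of_ker_auxPencil_eq_bot (hf : Injective f) (hb : ∀ j, b j ≠ 0)
    (hB : ∀ u, B *ᵥ u = extend f (b * u) 0)
    (hC : ∀ x, C *ᵥ x = 0 → Ĉ *ᵥ Sum.elim x 0 = 0 ∧ ∀ j, x (f j) = 0)
    (h : LinearMap.ker (fromRows (fromBlocks (zeroRows (Finset.univ.image f) A) B
      (0 : Matrix κ ι ℂ) 0 - s • 1) Ĉ).mulVecLin = ⊥) :
    LinearMap.ker (fromBlocks (A - s • 1) B C 0).mulVecLin = ⊥ := by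
  rw [ker_mulVecLin_eq_bot_iff] at h ⊢
  intro z hz
  rw [← Sum.elim_comp_inl_inr z] at hz ⊢
  set x := z ∘ Sum.inl
  set u := z ∘ Sum.inr
  obtain ⟨hAxu, hCx⟩ := (fromBlocks_sub_smul_one_mulVec_eq_zero_iff _ _ _ _ _ _).1 hz
  obtain ⟨hĈ, hxI⟩ := hC x hCx
  have hx : x = 0 := by
    refine (Sum.elim_eq_iff.1 ((h _ ((fromRows_sub_smul_one_mulVec_eq_zero_iff _ _ _ _).2
      ⟨(fromBlocks_zeroRows_mulVec_eq_smul_iff x 0).2 ⟨?_, smul_zero s⟩, hĈ⟩)).trans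
      Sum.elim_zero_zero.symm)).1
    funext i
    by_cases hi : ∃ j, f j = i
    · obtain ⟨j, rfl⟩ := hi
      simp [zeroRows_mulVec, hxI]
    · have := congrFun hAxu i
      simp_all [zeroRows_mulVec, extend_apply']
  rw [← Sum.elim_zero_zero, Sum.elim_eq_iff]
  refine ⟨hx, eq_zero_of_mulVec_eq_zero_of_eq_extend hf hb hB ?_⟩
  simpa [hx] using hAxu

end Kernel

theorem isStructObs_dedicatedPattern_of_surjective {ι : Type*} [Fintype ι] [DecidableEq ι]
    {k : ℕ} (M : Finset (ι × ι)) {c : Fin k → ι} (hc : Surjective c) :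
    IsStructObs M (dedicatedPattern c) := by
  refine holdsGenerically_forall_ne_zero.mono fun v hv s => ?_
  rw [rank_eq_card_iff, ker_mulVecLin_eq_bot_iff]
  intro x hx
  have hCx := ((fromRows_sub_smul_one_mulVec_eq_zero_iff _ _ _ _).1 hx).2
  rw [realize_dedicatedPattern_mulVec_eq_zero_iff fun e => hv (Sum.inr e)] at hCx
  funext j
  obtain ⟨i, rfl⟩ := hc j
  exact hCx i

section Bounds

variable {n q k : ℕ} {A : Finset (Fin n × Fin n)} {B : Finset (Fin n × Fin q)}
  {f : Fin q → Fin n}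

theorem isStructObs_auxPattern_of_isGSIO (hf : Injective f)
    (hB : ∀ i j, (i, j) ∈ B ↔ i = f j) {c : Fin k → Fin n}
    (h : IsGSIO A B (dedicatedPattern c)) :
    IsStructObs (auxPattern A B (Finset.univ.image f))
      (dedicatedPattern (Sum.inl ∘ c : Fin k → Fin n ⊕ Fin q)) := by
  have hι : Injective (Sum.inl ∘ auxVar (A := A) (B := B) (I := Finset.univ.image f) :
      _ → _ ⊕ {e // e ∈ dedicatedPattern c}) := Sum.inl_injective.comp auxVar_injective
  obtain ⟨c₀, h₀⟩ := HoldsGenerically.exists_extend h hι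
  refine ((h₀.comp Sum.inl_injective).and holdsGenerically_forall_ne_zero).mono ?_
  rintro w ⟨hrank, hw⟩ s
  set v := extend (Sum.inl ∘ auxVar) (w ∘ Sum.inl) c₀
  have hwv : (fun e => w (Sum.inl e)) = (v ∘ Sum.inl) ∘ auxVar := (extend_comp hι _ _).symm
  have hb : ∀ j, v (Sum.inl (Sum.inr ⟨(f j, j), (hB _ _).2 rfl⟩)) ≠ 0 := fun j => by
    have := hw (Sum.inl ⟨(Sum.inl (f j), Sum.inr j), by simp [hB]⟩)
    rwa [congrFun hwv] at this
  have hker := hrank s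
  rw [show n + q = Fintype.card (Fin n ⊕ Fin q) by simp, rank_eq_card_iff] at hker
  rw [hwv, realize_auxPattern, rank_eq_card_iff]
  refine ker_auxPencil_eq_bot_of_ker_rosenbrock_eq_bot hf hb (realize_mulVec_eq_extend hf hB _)
    (fun x y hxy => ?_) hker
  rw [realize_dedicatedPattern_mulVec_eq_zero_iff fun e => hw (Sum.inr e)] at hxy
  exact realize_dedicatedPattern_mulVec_eq_zero _ hxy

theorem isGSIO_of_isStructObs_auxPattern (hf : Injective f)
    (hB : ∀ i j, (i, j) ∈ B ↔ i = f j) {c : Fin k → Fin n ⊕ Fin q}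
    (h : IsStructObs (auxPattern A B (Finset.univ.image f)) (dedicatedPattern c)) :
    IsGSIO A B (dedicatedPattern (Fin.append (Sum.elim id f ∘ c) f)) := by
  obtain ⟨c₀, h₀⟩ := HoldsGenerically.exists_extend h Sum.inl_injective
  have hι : Injective (Sum.inl ∘ auxVar (A := A) (B := B) (I := Finset.univ.image f) :
      _ → _ ⊕ {e // e ∈ dedicatedPattern (Fin.append (Sum.elim id f ∘ c) f)}) :=
    Sum.inl_injective.comp auxVar_injective
  refine ((h₀.comp hι).and holdsGenerically_forall_ne_zero).mono ?_
  rintro v ⟨hobs, hv⟩ s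
  have hwv : (fun e => extend Sum.inl (v ∘ Sum.inl ∘ auxVar) c₀ (Sum.inl e)) =
      (v ∘ Sum.inl) ∘ auxVar := extend_comp Sum.inl_injective _ _
  have hker := hobs s
  rw [hwv, realize_auxPattern, rank_eq_card_iff] at hker
  rw [show n + q = Fintype.card (Fin n ⊕ Fin q) by simp, rank_eq_card_iff]
  refine ker_rosenbrock_eq_bot_of_ker_auxPencil_eq_bot hf (fun j => hv _)
    (realize_mulVec_eq_extend hf hB _) (fun x hx => ?_) hker
  rw [realize_dedicatedPattern_mulVec_eq_zero_iff fun e => hv (Sum.inr e), Fin.forall_fin_add]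
    at hx
  simp only [Function.comp_apply, Fin.append_left, Fin.append_right] at hx
  refine ⟨realize_dedicatedPattern_mulVec_eq_zero _ fun i => ?_, hx.2⟩
  have hxc := hx.1 i
  generalize c i = y at hxc ⊢
  cases y with
  | inl a => exact hxc
  | inr j => rfl

end Bounds

/-- For a structured system `(A, B)` with `q` dedicated inputs (input `j` drives state
`f j`, with `f` injective), the minimum number of dedicated sensors `C` making
`(A, B, C)` GSIO lies in the integer interval `[H(Â), H(Â) + q]`, where `Â` is the
auxiliary pattern. -/
theorem minimal_GSIO_bounds (n q : ℕ) (A : Finset (Fin n × Fin n))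
    (B : Finset (Fin n × Fin q)) (f : Fin q → Fin n) (hf : Function.Injective f)
    (hB : ∀ (i : Fin n) (j : Fin q), (i, j) ∈ B ↔ i = f j) :
    Hmin (auxPattern A B (Finset.image f Finset.univ)) ≤
        sInf {k : ℕ | ∃ C : Finset (Fin k × Fin n),
          (∀ i : Fin k, ∃! j : Fin n, (i, j) ∈ C) ∧ IsGSIO A B C} ∧
      sInf {k : ℕ | ∃ C : Finset (Fin k × Fin n),
          (∀ i : Fin k, ∃! j : Fin n, (i, j) ∈ C) ∧ IsGSIO A B C} ≤
        Hmin (auxPattern A B (Finset.image f Finset.univ)) + q := by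
  simp only [Hmin, exists_dedicated_iff]
  set SH := {k | ∃ c : Fin k → Fin n ⊕ Fin q,
    IsStructObs (auxPattern A B (Finset.image f Finset.univ)) (dedicatedPattern c)}
  set SG := {k | ∃ c : Fin k → Fin n, IsGSIO A B (dedicatedPattern c)}
  have hSH : SH.Nonempty := ⟨_, _, isStructObs_dedicatedPattern_of_surjective _
    (Fintype.equivFin (Fin n ⊕ Fin q)).symm.surjective⟩
  have hSH_add : ∀ k ∈ SH, k + q ∈ SG := fun _ ⟨_, hc⟩ =>
    ⟨_, isGSIO_of_isStructObs_auxPattern hf hB hc⟩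
  have hSG_sub : SG ⊆ SH := fun _ ⟨_, hc⟩ => ⟨_, isStructObs_auxPattern_of_isGSIO hf hB hc⟩
  have hSG : SG.Nonempty := ⟨_, hSH_add _ hSH.some_mem⟩
  exact ⟨csInf_le_csInf (OrderBot.bddBelow _) hSG hSG_sub,
    Nat.sInf_le (hSH_add _ (Nat.sInf_mem hSH))⟩
end

section
/- Let A ∈ {0,*}^{n×n} and let B ∈ {0,*}^{n×q} be a dedicated input pattern. Consider dedicated sensors that may measure either a state or an input, i.e., output/feedthrough patterns (C,D) ∈ {0,*}^{m×n} × {0,*}^{m×q} in which every row of the compound pattern [C D] has exactly one free entry. Then the minimum number of such dedicated sensors making (A,B,C,D) GSIO lies in the integer interval [H(A), H(A)+q], where H(A) is the minimum number of dedicated sensors making the pair (A,C) structurally observable. -/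
/-- The structured system `(A, B, C, D)` is generically state and input observable
(GSIO), where the output/feedthrough patterns are encoded by a single compound pattern
`CD` on columns `Fin n ⊕ Fin q` (state columns and input columns): there is a nonzero
polynomial in the free entries such that every realization at which it does not vanish
has a Rosenbrock matrix `[[Ã - s I, B̃], [C̃, D̃]]` of full column rank `n + q` for every
`s ∈ ℂ`. -/
def IsGSIOD {n q m : ℕ} (A : Finset (Fin n × Fin n)) (B : Finset (Fin n × Fin q))
    (CD : Finset (Fin m × (Fin n ⊕ Fin q))) : Prop :=
  ∃ p : MvPolynomial (({e // e ∈ A} ⊕ {e // e ∈ B}) ⊕ {e // e ∈ CD}) ℂ, p ≠ 0 ∧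
    ∀ v : (({e // e ∈ A} ⊕ {e // e ∈ B}) ⊕ {e // e ∈ CD}) → ℂ,
      MvPolynomial.eval v p ≠ 0 → ∀ s : ℂ,
        (Matrix.fromBlocks
            (Pattern.realize A (fun e => v (Sum.inl (Sum.inl e))) -
              s • (1 : Matrix (Fin n) (Fin n) ℂ))
            (Pattern.realize B (fun e => v (Sum.inl (Sum.inr e))))
            (Matrix.of fun i j =>
              Pattern.realize CD (fun e => v (Sum.inr e)) i (Sum.inl j))
            (Matrix.of fun i j =>
              Pattern.realize CD (fun e => v (Sum.inr e)) i (Sum.inr j))).rank = n + q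

open Matrix MvPolynomial

namespace Matrix

theorem rank_eq_card_iff_s2 {m n K : Type*} [Fintype m] [Fintype n] [Field K]
    (M : Matrix m n K) : M.rank = Fintype.card n ↔ ∀ x, M *ᵥ x = 0 → x = 0 := by
  rw [rank_eq_finrank_span_cols, ← Set.finrank, eq_comm,
    ← linearIndependent_iff_card_eq_finrank_span, ← mulVec_injective_iff]
  exact injective_iff_map_eq_zero M.mulVecLin

theorem rank_fromRows_eq_card_iff {m₁ m₂ n K : Type*} [Fintype m₁] [Fintype m₂]
    [Fintype n] [Field K] (M₁ : Matrix m₁ n K) (M₂ : Matrix m₂ n K) :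
    (fromRows M₁ M₂).rank = Fintype.card n ↔
      ∀ x, M₁ *ᵥ x = 0 → M₂ *ᵥ x = 0 → x = 0 := by
  rw [rank_eq_card_iff_s2]
  refine forall_congr' fun x => ⟨fun h h₁ h₂ => h ?_, fun h hx => h ?_ ?_⟩
  · rw [fromRows_mulVec, h₁, h₂, Sum.elim_zero_zero]
  all_goals funext i
  exacts [congrFun hx (Sum.inl i), congrFun hx (Sum.inr i)]

theorem fromBlocks_eq_fromRows_fromCols {m₁ m₂ n₁ n₂ R : Type*} (M₁₁ : Matrix m₁ n₁ R)
    (M₁₂ : Matrix m₁ n₂ R) (N : Matrix m₂ (n₁ ⊕ n₂) R) :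
    fromBlocks M₁₁ M₁₂ (of fun i j => N i (Sum.inl j)) (of fun i j => N i (Sum.inr j)) =
      fromRows (fromCols M₁₁ M₁₂) N := by
  ext (i | i) (j | j) <;> rfl

theorem rank_fromBlocks_eq_add_iff {m₁ m₂ K : Type*} [Fintype m₁]
    [Fintype m₂] [Field K] {n₁ n₂ : ℕ} (M₁₁ : Matrix m₁ (Fin n₁) K) (M₁₂ : Matrix m₁ (Fin n₂) K)
    (N : Matrix m₂ (Fin n₁ ⊕ Fin n₂) K) :
    (fromBlocks M₁₁ M₁₂ (of fun i j => N i (Sum.inl j))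
        (of fun i j => N i (Sum.inr j))).rank = n₁ + n₂ ↔
      ∀ y, M₁₁ *ᵥ (y ∘ Sum.inl) + M₁₂ *ᵥ (y ∘ Sum.inr) = 0 → N *ᵥ y = 0 → y = 0 := by
  have hcard : Fintype.card (Fin n₁ ⊕ Fin n₂) = n₁ + n₂ := by simp
  rw [← hcard, fromBlocks_eq_fromRows_fromCols, rank_fromRows_eq_card_iff]
  simp only [fromCols_mulVec]

end Matrix

/-- `IsStructObs` and `IsGSIOD` are, by definition, `IsGeneric ℂ` of their rank conditions. -/
def IsGeneric (R : Type*) [CommRing R] {σ : Type*} (P : (σ → R) → Prop) : Prop :=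
  ∃ p : MvPolynomial σ R, p ≠ 0 ∧ ∀ v, eval v p ≠ 0 → P v

namespace IsGeneric

variable {R : Type*} [CommRing R] {σ τ : Type*} {P Q : (σ → R) → Prop}

theorem mono (h : IsGeneric R P) (hPQ : ∀ v, P v → Q v) : IsGeneric R Q :=
  let ⟨p, hp, hP⟩ := h
  ⟨p, hp, fun v hv => hPQ v (hP v hv)⟩

theorem and [IsDomain R] (hP : IsGeneric R P) (hQ : IsGeneric R Q) :
    IsGeneric R fun v => P v ∧ Q v := by
  obtain ⟨p, hp, hpP⟩ := hP
  obtain ⟨q, hq, hqQ⟩ := hQ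
  refine ⟨p * q, mul_ne_zero hp hq, fun v hv => ?_⟩
  rw [map_mul] at hv
  exact ⟨hpP v (left_ne_zero_of_mul hv), hqQ v (right_ne_zero_of_mul hv)⟩

theorem forall_ne_zero [IsDomain R] {ι : Type*} [Fintype ι] (e : ι → σ) :
    IsGeneric R fun v => ∀ i, v (e i) ≠ 0 := by
  refine ⟨∏ i, X (e i), Finset.prod_ne_zero_iff.2 fun i _ => X_ne_zero _, fun v hv i => ?_⟩
  simp only [map_prod, eval_X] at hv
  exact fun h => hv (Finset.prod_eq_zero (Finset.mem_univ i) h)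

theorem comp (h : IsGeneric R P) {ρ : σ → τ} (hρ : ρ.Injective) :
    IsGeneric R fun w => P (w ∘ ρ) := by
  obtain ⟨p, hp, hP⟩ := h
  refine ⟨rename ρ p, fun h0 => hp (rename_injective ρ hρ (by rw [h0, map_zero])), ?_⟩
  intro w hw
  rw [eval_rename] at hw
  exact hP _ hw

theorem exists_specialize [IsDomain R] [Infinite R] {β : Type*} {P : (σ ⊕ β → R) → Prop}
    (h : IsGeneric R P) : ∃ b, IsGeneric R fun v => P (Sum.elim v b) := by
  obtain ⟨p, hp, hP⟩ := h
  let restrict (b : β → R) : MvPolynomial σ R :=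
    eval₂ C (Sum.elim X fun j => C (b j) : σ ⊕ β → MvPolynomial σ R) p
  have eval_restrict (b : β → R) (v : σ → R) : eval v (restrict b) = eval (Sum.elim v b) p := by
    rw [← eval_assoc]
    congr 2
    funext x
    cases x <;> simp
  obtain ⟨b, hb⟩ : ∃ b, restrict b ≠ 0 := by
    by_contra! h0
    refine hp (MvPolynomial.funext fun w => ?_)
    rw [map_zero, ← Sum.elim_comp_inl_inr w, ← eval_restrict, h0, map_zero]
  exact ⟨b, restrict b, hb, fun v hv => hP _ (by rwa [← eval_restrict])⟩

end IsGeneric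

namespace Pattern

def IsDedicated {κ ι : Type*} (P : Finset (κ × ι)) : Prop :=
  ∀ i, ∃! j, (i, j) ∈ P

variable {κ ι : Type*} [Fintype κ] [DecidableEq κ] [DecidableEq ι]

def ofCols (σ : κ → ι) : Finset (κ × ι) :=
  Finset.univ.image fun i => (i, σ i)

variable {σ : κ → ι}

@[simp]
theorem mem_ofCols {i : κ} {j : ι} : (i, j) ∈ ofCols σ ↔ j = σ i := by
  simp [ofCols, eq_comm]

theorem isDedicated_iff_exists_eq_ofCols {P : Finset (κ × ι)} :
    IsDedicated P ↔ ∃ σ : κ → ι, P = ofCols σ := by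
  refine ⟨fun h => ?_, ?_⟩
  · choose σ hσ hσu using h
    refine ⟨σ, Finset.ext fun ⟨i, j⟩ => ?_⟩
    rw [mem_ofCols]
    exact ⟨hσu i j, fun hj => hj ▸ hσ i⟩
  · rintro ⟨σ, rfl⟩ i
    exact ⟨σ i, mem_ofCols.2 rfl, fun j => mem_ofCols.1⟩

theorem isDedicated_ofCols (σ : κ → ι) : IsDedicated (ofCols σ) :=
  isDedicated_iff_exists_eq_ofCols.2 ⟨σ, rfl⟩

def colEntry (σ : κ → ι) (i : κ) : {e // e ∈ ofCols σ} :=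
  ⟨(i, σ i), mem_ofCols.2 rfl⟩

theorem colEntry_injective : (colEntry σ).Injective := fun _ _ h =>
  congrArg (fun e : {e // e ∈ ofCols σ} => e.1.1) h

theorem colEntry_fst (e : {e // e ∈ ofCols σ}) : colEntry σ e.1.1 = e := by
  obtain ⟨⟨i, j⟩, he⟩ := e
  exact Subtype.ext (Prod.ext rfl (mem_ofCols.1 he).symm)

theorem realize_ofCols_mulVec_apply [Fintype ι] (v : {e // e ∈ ofCols σ} → ℂ) (x : ι → ℂ)
    (i : κ) : (realize (ofCols σ) v *ᵥ x) i = v (colEntry σ i) * x (σ i) := by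
  rw [mulVec, dotProduct, Finset.sum_eq_single (σ i)]
  · simp [realize, colEntry]
  · intro j _ hj
    simp [realize, hj]
  · simp

end Pattern

open Pattern

theorem isStructObs_ofCols_of_surjective {ι : Type*} [Fintype ι] [DecidableEq ι] {m : ℕ}
    (M : Finset (ι × ι)) {σ : Fin m → ι} (hσ : σ.Surjective) : IsStructObs M (ofCols σ) :=
  (IsGeneric.forall_ne_zero fun i => Sum.inr (colEntry σ i)).mono fun v hv s => by
    rw [rank_fromRows_eq_card_iff]
    intro x _ hC
    funext j
    obtain ⟨i, rfl⟩ := hσ j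
    have hi := congrFun hC i
    rw [realize_ofCols_mulVec_apply] at hi
    exact (mul_eq_zero.1 hi).resolve_left (hv i)

theorem isGSIOD_ofCols_of_isStructObs {n q h : ℕ} {A : Finset (Fin n × Fin n)}
    (B : Finset (Fin n × Fin q)) {γ : Fin h → Fin n} (hobs : IsStructObs A (ofCols γ)) :
    IsGSIOD A B (ofCols (Fin.addCases (Sum.inl ∘ γ) Sum.inr : Fin (h + q) → Fin n ⊕ Fin q)) := by
  set τ : Fin (h + q) → Fin n ⊕ Fin q := Fin.addCases (Sum.inl ∘ γ) Sum.inr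
  let ρ : {e // e ∈ A} ⊕ {e // e ∈ ofCols γ} →
      ({e // e ∈ A} ⊕ {e // e ∈ B}) ⊕ {e // e ∈ ofCols τ} :=
    Sum.elim (Sum.inl ∘ Sum.inl) fun e => Sum.inr (colEntry τ (Fin.castAdd q e.1.1))
  have hρ : ρ.Injective := by
    rintro (a | e) (a' | e') he <;> simp only [ρ, Sum.elim_inl, Sum.elim_inr, Function.comp,
      reduceCtorEq, Sum.inl.injEq, Sum.inr.injEq] at he
    · rw [he]
    · rw [← colEntry_fst e, ← colEntry_fst e', Fin.castAdd_inj.1 (colEntry_injective he)]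
  refine ((IsGeneric.comp hobs hρ).and
    (IsGeneric.forall_ne_zero fun t => Sum.inr (colEntry τ (Fin.natAdd h t)))).mono ?_
  rintro v ⟨hstate, hinput⟩ s
  rw [rank_fromBlocks_eq_add_iff]
  intro y htop hCD
  have hu : y ∘ Sum.inr = 0 := funext fun t => by
    have ht := congrFun hCD (Fin.natAdd h t)
    rw [realize_ofCols_mulVec_apply] at ht
    simpa [τ, hinput t] using ht
  have hx : y ∘ Sum.inl = 0 := by
    refine (rank_fromRows_eq_card_iff _ _).1 (hstate s) _ ?_ (funext fun i => ?_)
    · rwa [hu, mulVec_zero, add_zero] at htop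
    · have hi := congrFun hCD (Fin.castAdd q i)
      rw [realize_ofCols_mulVec_apply] at hi ⊢
      simpa [τ, ρ, colEntry] using hi
  ext (j | t)
  exacts [congrFun hx j, congrFun hu t]

theorem isStructObs_ofCols_of_isGSIOD {n q k : ℕ} {A : Finset (Fin n × Fin n)}
    {B : Finset (Fin n × Fin q)} {σ : Fin k → Fin n ⊕ Fin q} (f : Fin q → Fin n)
    (hσ : IsGSIOD A B (ofCols σ)) : IsStructObs A (ofCols (Sum.elim id f ∘ σ)) := by
  set g := Sum.elim id f ∘ σ
  let ρ : ({e // e ∈ A} ⊕ {e // e ∈ B}) ⊕ {e // e ∈ ofCols σ} →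
      ({e // e ∈ A} ⊕ {e // e ∈ ofCols g}) ⊕ {e // e ∈ B} :=
    Sum.elim (Sum.elim (Sum.inl ∘ Sum.inl) Sum.inr) fun e => Sum.inl (Sum.inr (colEntry g e.1.1))
  have hρ : ρ.Injective := by
    rintro ((a | b) | e) ((a' | b') | e') he <;> simp only [ρ, Sum.elim_inl, Sum.elim_inr,
      Function.comp, reduceCtorEq, Sum.inl.injEq, Sum.inr.injEq] at he
    · rw [he]
    · rw [he]
    · rw [← colEntry_fst e, ← colEntry_fst e', colEntry_injective he]
  obtain ⟨b, hb⟩ := (IsGeneric.comp hσ hρ).exists_specialize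
  refine hb.mono fun v hv s => ?_
  have hGSIO := hv s
  rw [rank_fromBlocks_eq_add_iff] at hGSIO
  rw [rank_fromRows_eq_card_iff]
  intro x hA hC
  have hy := hGSIO (Sum.elim x 0) ?_ (funext fun i => ?_)
  · exact funext fun j => congrFun hy (Sum.inl j)
  · simpa [ρ] using hA
  · have hi := congrFun hC i
    rw [realize_ofCols_mulVec_apply] at hi ⊢
    cases hσi : σ i <;> simp_all [g, ρ, colEntry]

theorem exists_isGSIOD_of_isStructObs {n q h : ℕ} {A : Finset (Fin n × Fin n)}
    (B : Finset (Fin n × Fin q)) {C : Finset (Fin h × Fin n)} (hC : IsDedicated C)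
    (hobs : IsStructObs A C) :
    ∃ CD : Finset (Fin (h + q) × (Fin n ⊕ Fin q)), IsDedicated CD ∧ IsGSIOD A B CD := by
  obtain ⟨γ, rfl⟩ := isDedicated_iff_exists_eq_ofCols.1 hC
  exact ⟨_, isDedicated_ofCols _, isGSIOD_ofCols_of_isStructObs B hobs⟩

theorem exists_isStructObs_of_isGSIOD {n q k : ℕ} {A : Finset (Fin n × Fin n)}
    {B : Finset (Fin n × Fin q)} (f : Fin q → Fin n) {CD : Finset (Fin k × (Fin n ⊕ Fin q))}
    (hCD : IsDedicated CD) (hgsio : IsGSIOD A B CD) :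
    ∃ C : Finset (Fin k × Fin n), IsDedicated C ∧ IsStructObs A C := by
  obtain ⟨σ, rfl⟩ := isDedicated_iff_exists_eq_ofCols.1 hCD
  exact ⟨_, isDedicated_ofCols _, isStructObs_ofCols_of_isGSIOD f hgsio⟩

theorem minimal_GSIO_bounds_with_feedthrough_general (n q : ℕ) (A : Finset (Fin n × Fin n))
    (B : Finset (Fin n × Fin q)) (f : Fin q → Fin n) :
    Hmin A ≤
        sInf {k : ℕ | ∃ CD : Finset (Fin k × (Fin n ⊕ Fin q)),
          (∀ i : Fin k, ∃! c : Fin n ⊕ Fin q, (i, c) ∈ CD) ∧ IsGSIOD A B CD} ∧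
      sInf {k : ℕ | ∃ CD : Finset (Fin k × (Fin n ⊕ Fin q)),
          (∀ i : Fin k, ∃! c : Fin n ⊕ Fin q, (i, c) ∈ CD) ∧ IsGSIOD A B CD} ≤
        Hmin A + q := by
  set S := {k : ℕ | ∃ CD : Finset (Fin k × (Fin n ⊕ Fin q)),
    (∀ i : Fin k, ∃! c : Fin n ⊕ Fin q, (i, c) ∈ CD) ∧ IsGSIOD A B CD}
  obtain ⟨C, hC, hobs⟩ : Hmin A ∈ {k : ℕ | ∃ C : Finset (Fin k × Fin n),
      (∀ i : Fin k, ∃! j : Fin n, (i, j) ∈ C) ∧ IsStructObs A C} :=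
    Nat.sInf_mem ⟨n, ofCols id, isDedicated_ofCols id,
      isStructObs_ofCols_of_surjective A Function.surjective_id⟩
  have hupper : Hmin A + q ∈ S := exists_isGSIOD_of_isStructObs B hC hobs
  refine ⟨?_, Nat.sInf_le hupper⟩
  obtain ⟨CD, hCD, hgsio⟩ := Nat.sInf_mem ⟨_, hupper⟩
  exact Nat.sInf_le (exists_isStructObs_of_isGSIOD f hCD hgsio)

/-- For a structured system `(A, B)` with `q` dedicated inputs, the minimum number of
dedicated sensors that may measure either a state or an input (each row of the compound
pattern `[C D]` has exactly one free entry) making `(A, B, C, D)` GSIO lies in the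
integer interval `[H(A), H(A) + q]`. -/
theorem minimal_GSIO_bounds_with_feedthrough (n q : ℕ) (A : Finset (Fin n × Fin n))
    (B : Finset (Fin n × Fin q)) (f : Fin q → Fin n) (hf : Function.Injective f)
    (hB : ∀ (i : Fin n) (j : Fin q), (i, j) ∈ B ↔ i = f j) :
    Hmin A ≤
        sInf {k : ℕ | ∃ CD : Finset (Fin k × (Fin n ⊕ Fin q)),
          (∀ i : Fin k, ∃! c : Fin n ⊕ Fin q, (i, c) ∈ CD) ∧ IsGSIOD A B CD} ∧
      sInf {k : ℕ | ∃ CD : Finset (Fin k × (Fin n ⊕ Fin q)),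
          (∀ i : Fin k, ∃! c : Fin n ⊕ Fin q, (i, c) ∈ CD) ∧ IsGSIOD A B CD} ≤
        Hmin A + q :=
  minimal_GSIO_bounds_with_feedthrough_general n q A B f
end

section
/- Let G be a finite directed graph on vertex set V with edge relation r, let 'reach' denote the reflexive-transitive closure of r, and let u ∈ V. Assume that at least two distinct sink strongly connected components of G are reachable from u. For i = 1,2, let Y_i ⊆ V be a set of minimum cardinality subject to the condition that every vertex of V can reach some element of Y_i. Then the set {v ∈ V : u cannot reach any element of Y_1 in the digraph obtained from G by deleting vertex v} equals the set {v ∈ V : u cannot reach any element of Y_2 in the digraph obtained from G by deleting vertex v}. (Equivalently, the set of vertices lying on every directed path from u to Y_i — the essential vertex set V_ess({u},Y_i) — is the same for all minimum placements Y_i.) -/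
/-- `ReachAvoiding r v x y` means that in the digraph with edge relation `r` from which
the vertex `v` has been deleted (together with all edges incident to it), there is a
directed path from `x` to `y`. -/
def ReachAvoiding {V : Type*} (r : V → V → Prop) (v x y : V) : Prop :=
  x ≠ v ∧ y ≠ v ∧ Relation.ReflTransGen (fun a b => r a b ∧ a ≠ v ∧ b ≠ v) x y

/-!
An element of a minimum placement `Y` lies in a sink SCC, since otherwise it could be dropped
from `Y`. Suppose `u` reaches `y ∈ Y₁` avoiding `v`. If `y` does not reach `v`, no path out of `y`
meets `v`, so the path continues to `Y₂`. Otherwise `v` lies in the sink SCC of `y`, hence in at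
most one of the two sink SCCs reachable from `u`; the other one, `c`, neither reaches `v` nor is
reached from it, so every path `u ⟶ c` avoids `v`, and again the path continues from `c` to `Y₂`.
-/

open Relation

section

variable {V : Type*}

def InSinkSCC (r : V → V → Prop) (a : V) : Prop :=
  ∀ w, ReflTransGen r a w → ReflTransGen r w a

def IsReachCover (r : V → V → Prop) (Y : Finset V) : Prop :=
  ∀ v, ∃ y ∈ Y, ReflTransGen r v y

variable {r : V → V → Prop}

namespace ReachAvoiding

theorem trans {v x y z : V} (hxy : ReachAvoiding r v x y) (hyz : ReachAvoiding r v y z) :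
    ReachAvoiding r v x z :=
  ⟨hxy.1, hyz.2.1, hxy.2.2.trans hyz.2.2⟩

theorem of_not_reflTransGen_left {v x z : V} (h : ReflTransGen r x z)
    (hxv : ¬ ReflTransGen r x v) : ReachAvoiding r v x z := by
  refine ⟨fun hx => hxv (hx ▸ .refl), fun hz => hxv (hz ▸ h), ?_⟩
  induction h with
  | refl => exact .refl
  | tail hxb hbc ih =>
    exact ih.tail ⟨hbc, fun hb => hxv (hb ▸ hxb), fun hc => hxv (hc ▸ hxb.tail hbc)⟩

theorem of_not_reflTransGen_right {v x z : V} (h : ReflTransGen r x z) (hx : x ≠ v)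
    (hvz : ¬ ReflTransGen r v z) : ReachAvoiding r v x z := by
  refine ⟨hx, fun hz => hvz (hz ▸ .refl), ?_⟩
  induction h using ReflTransGen.head_induction_on with
  | refl => exact .refl
  | head hac hcz ih =>
    have hc : _ ≠ v := fun hc => hvz (hc ▸ hcz)
    exact .head ⟨hac, hx, hc⟩ (ih hc)

end ReachAvoiding

theorem IsReachCover.erase_of_not_inSinkSCC [DecidableEq V] {Y : Finset V}
    (hY : IsReachCover r Y) {y : V} (hy : ¬ InSinkSCC r y) : IsReachCover r (Y.erase y) := by
  obtain ⟨w, hyw, hwy⟩ : ∃ w, ReflTransGen r y w ∧ ¬ ReflTransGen r w y := by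
    simpa [InSinkSCC] using hy
  intro z
  obtain ⟨y', hy', hzy'⟩ := hY z
  by_cases hne : y' = y
  · obtain ⟨y'', hy'', hwy''⟩ := hY w
    have hne' : y'' ≠ y := fun h => hwy (h ▸ hwy'')
    exact ⟨y'', Finset.mem_erase.2 ⟨hne', hy''⟩, (hne ▸ hzy').trans (hyw.trans hwy'')⟩
  · exact ⟨y', Finset.mem_erase.2 ⟨hne, hy'⟩, hzy'⟩

theorem inSinkSCC_of_mem_of_card_le {Y : Finset V} (hY : IsReachCover r Y)
    (hmin : ∀ Y' : Finset V, IsReachCover r Y' → Y.card ≤ Y'.card) {y : V} (hy : y ∈ Y) :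
    InSinkSCC r y := by
  classical
  by_contra hsink
  have := hmin _ (hY.erase_of_not_inSinkSCC hsink)
  exact (Finset.card_erase_lt_of_mem hy).not_ge this

theorem IsReachCover.exists_reachAvoiding {Y : Finset V} (hY : IsReachCover r Y) {u c v : V}
    (huc : ReachAvoiding r v u c) (hcv : ¬ ReflTransGen r c v) :
    ∃ y ∈ Y, ReachAvoiding r v u y := by
  obtain ⟨y, hy, hcy⟩ := hY c
  exact ⟨y, hy, huc.trans (.of_not_reflTransGen_left hcy hcv)⟩

theorem not_reflTransGen_or_of_inSinkSCC {a b y v : V} (ha : InSinkSCC r a)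
    (hb : InSinkSCC r b) (hab : ¬ (ReflTransGen r a b ∧ ReflTransGen r b a))
    (hy : InSinkSCC r y) (hyv : ReflTransGen r y v) :
    ¬ ReflTransGen r a v ∨ ¬ ReflTransGen r b v := by
  by_contra! ⟨hav, hbv⟩
  have hay : ReflTransGen r a y := hav.trans (hy v hyv)
  have hby : ReflTransGen r b y := hbv.trans (hy v hyv)
  exact hab ⟨hay.trans (hb y hby), hby.trans (ha y hay)⟩

theorem exists_reachAvoiding_of_inSinkSCC {u v y : V}
    (hsinks : ∃ a b : V, ReflTransGen r u a ∧ ReflTransGen r u b ∧ InSinkSCC r a ∧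
      InSinkSCC r b ∧ ¬ (ReflTransGen r a b ∧ ReflTransGen r b a))
    {Y : Finset V} (hY : IsReachCover r Y) (hy : InSinkSCC r y) (huy : ReachAvoiding r v u y) :
    ∃ y' ∈ Y, ReachAvoiding r v u y' := by
  by_cases hyv : ReflTransGen r y v
  · obtain ⟨a, b, hua, hub, ha, hb, hab⟩ := hsinks
    obtain ⟨c, huc, hcv⟩ : ∃ c, ReflTransGen r u c ∧ ¬ ReflTransGen r c v := by
      rcases not_reflTransGen_or_of_inSinkSCC ha hb hab hy hyv with hav | hbv
      exacts [⟨a, hua, hav⟩, ⟨b, hub, hbv⟩]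
    have hvc : ¬ ReflTransGen r v c := fun hvc => hcv ((hy c (hyv.trans hvc)).trans hyv)
    exact hY.exists_reachAvoiding (.of_not_reflTransGen_right huc huy.1 hvc) hcv
  · exact hY.exists_reachAvoiding huy hyv

end

theorem essential_set_independent_of_minimum_placement_general
    (V : Type*) (r : V → V → Prop) (u : V)
    (hsinks : ∃ a b : V,
      Relation.ReflTransGen r u a ∧ Relation.ReflTransGen r u b ∧
      (∀ w : V, Relation.ReflTransGen r a w → Relation.ReflTransGen r w a) ∧
      (∀ w : V, Relation.ReflTransGen r b w → Relation.ReflTransGen r w b) ∧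
      ¬ (Relation.ReflTransGen r a b ∧ Relation.ReflTransGen r b a))
    (Y₁ Y₂ : Finset V)
    (hY₁ : ∀ v : V, ∃ y ∈ Y₁, Relation.ReflTransGen r v y)
    (hY₂ : ∀ v : V, ∃ y ∈ Y₂, Relation.ReflTransGen r v y)
    (hmin₁ : ∀ Y' : Finset V, (∀ v : V, ∃ y ∈ Y', Relation.ReflTransGen r v y) →
      Y₁.card ≤ Y'.card)
    (hmin₂ : ∀ Y' : Finset V, (∀ v : V, ∃ y ∈ Y', Relation.ReflTransGen r v y) →
      Y₂.card ≤ Y'.card) :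
    {v : V | ¬ ∃ y ∈ Y₁, ReachAvoiding r v u y} =
      {v : V | ¬ ∃ y ∈ Y₂, ReachAvoiding r v u y} := by
  ext v
  refine not_congr ⟨fun ⟨y, hy, huy⟩ => ?_, fun ⟨y, hy, huy⟩ => ?_⟩
  · exact exists_reachAvoiding_of_inSinkSCC hsinks hY₂
      (inSinkSCC_of_mem_of_card_le hY₁ hmin₁ hy) huy
  · exact exists_reachAvoiding_of_inSinkSCC hsinks hY₁
      (inSinkSCC_of_mem_of_card_le hY₂ hmin₂ hy) huy

/-- In a finite digraph in which at least two distinct sink strongly connected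
components are reachable from `u`, the set of vertices whose deletion destroys all
paths from `u` to `Y` (the essential vertex set `V_ess({u}, Y)`) is the same for every
minimum-cardinality set `Y` such that every vertex can reach `Y`. -/
theorem essential_set_independent_of_minimum_placement
    (V : Type*) [Fintype V] [DecidableEq V] (r : V → V → Prop) (u : V)
    (hsinks : ∃ a b : V,
      Relation.ReflTransGen r u a ∧ Relation.ReflTransGen r u b ∧
      (∀ w : V, Relation.ReflTransGen r a w → Relation.ReflTransGen r w a) ∧
      (∀ w : V, Relation.ReflTransGen r b w → Relation.ReflTransGen r w b) ∧
      ¬ (Relation.ReflTransGen r a b ∧ Relation.ReflTransGen r b a))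
    (Y₁ Y₂ : Finset V)
    (hY₁ : ∀ v : V, ∃ y ∈ Y₁, Relation.ReflTransGen r v y)
    (hY₂ : ∀ v : V, ∃ y ∈ Y₂, Relation.ReflTransGen r v y)
    (hmin₁ : ∀ Y' : Finset V, (∀ v : V, ∃ y ∈ Y', Relation.ReflTransGen r v y) →
      Y₁.card ≤ Y'.card)
    (hmin₂ : ∀ Y' : Finset V, (∀ v : V, ∃ y ∈ Y', Relation.ReflTransGen r v y) →
      Y₂.card ≤ Y'.card) :
    {v : V | ¬ ∃ y ∈ Y₁, ReachAvoiding r v u y} =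
      {v : V | ¬ ∃ y ∈ Y₂, ReachAvoiding r v u y} :=
  essential_set_independent_of_minimum_placement_general V r u hsinks Y₁ Y₂ hY₁ hY₂ hmin₁ hmin₂
end

section
/- Let Ã ∈ ℂ^{n×n}, B̃ ∈ ℂ^{n×q}, and C̃′ ∈ ℂ^{m×n}, and let X′ ⊆ {1,…,n} contain the indices of all nonzero columns of C̃′. Let C̃ ∈ ℂ^{|X′|×n} be the matrix whose rows are the standard basis row vectors e_i^T for i ∈ X′. Then for every s ∈ ℂ, if the matrix [[Ã−sI_n, B̃],[C̃′, 0]] has rank n+q, then the matrix [[Ã−sI_n, B̃],[C̃, 0]] also has rank n+q. (Replacing an arbitrary output matrix by dedicated sensors on the set of measured states preserves full column rank of the Rosenbrock matrix.) -/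
/-!
Full column rank of `[[A - s I, B], [C, 0]]` means that `(A - s I) x + B u = 0` and `C x = 0`
force `x = 0, u = 0`. With dedicated sensors on `X`, the condition `C x = 0` says that `x`
vanishes on `X`; since every column of `C'` outside `X` is zero, this implies `C' x = 0`. So the
kernel of the Rosenbrock matrix for the dedicated sensors lies in the (trivial) kernel of the
one for `C'`.
-/

open Matrix

namespace Matrix

variable {m n o p K : Type*} [Fintype n] [Fintype o]

theorem rank_eq_card_width_iff_s8 [Field K] [Fintype m] (M : Matrix m n K) :
    M.rank = Fintype.card n ↔ ∀ v, M *ᵥ v = 0 → v = 0 := by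
  have rank_nullity := LinearMap.finrank_range_add_finrank_ker M.mulVecLin
  rw [Module.finrank_fintype_fun_eq_card] at rank_nullity
  rw [← ker_mulVecLin_eq_bot_iff, ← Submodule.finrank_eq_zero, Matrix.rank]
  omega

theorem mulVec_eq_zero_of_forall_col_ne_zero [NonUnitalNonAssocSemiring K] (C : Matrix m n K)
    {x : n → K} (hx : ∀ j, (∃ i, C i j ≠ 0) → x j = 0) : C *ᵥ x = 0 := by
  funext i
  refine Finset.sum_eq_zero fun j _ => ?_
  by_cases hij : C i j = 0
  · simp [hij]
  · simp [hx j ⟨i, hij⟩]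

theorem of_ite_val_eq_mulVec [DecidableEq n] [NonAssocSemiring K] (P : n → Prop) (x : n → K) :
    (of fun (i : {j // P j}) (j : n) => if (i : n) = j then (1 : K) else 0) *ᵥ x =
      fun i => x i.val := by
  funext i
  simp [mulVec, dotProduct]

theorem fromBlocks_zero₂₂_mulVec_eq_zero_of_ker_le [NonUnitalNonAssocSemiring K]
    (M : Matrix n n K) (B : Matrix n o K) (C : Matrix m n K) (C' : Matrix p n K)
    (hC : ∀ x, C *ᵥ x = 0 → C' *ᵥ x = 0) {v : n ⊕ o → K}
    (hv : fromBlocks M B C 0 *ᵥ v = 0) : fromBlocks M B C' 0 *ᵥ v = 0 := by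
  rw [fromBlocks_mulVec, zero_mulVec, add_zero] at hv ⊢
  have hM : M *ᵥ (v ∘ Sum.inl) + B *ᵥ (v ∘ Sum.inr) = 0 := funext fun i => congrFun hv (.inl i)
  have hC' : C' *ᵥ (v ∘ Sum.inl) = 0 := hC _ (funext fun i => congrFun hv (.inr i))
  rw [hM, hC']
  exact Sum.elim_zero_zero

end Matrix

/-- Replacing an arbitrary output matrix `C'` by dedicated sensors (standard basis row
vectors) on a set `X` of states containing all states measured by `C'` (i.e. all
indices of nonzero columns of `C'`) preserves full column rank of the Rosenbrock
matrix. -/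
theorem dedicated_sensors_preserve_Rosenbrock_rank (n q m : ℕ)
    (A : Matrix (Fin n) (Fin n) ℂ) (B : Matrix (Fin n) (Fin q) ℂ)
    (C' : Matrix (Fin m) (Fin n) ℂ) (X : Finset (Fin n))
    (hX : ∀ j : Fin n, (∃ i : Fin m, C' i j ≠ 0) → j ∈ X) (s : ℂ)
    (h : (Matrix.fromBlocks (A - s • (1 : Matrix (Fin n) (Fin n) ℂ)) B C' 0).rank
      = n + q) :
    (Matrix.fromBlocks (A - s • (1 : Matrix (Fin n) (Fin n) ℂ)) B
        (Matrix.of fun (i : {x // x ∈ X}) (j : Fin n) => if (i : Fin n) = j then (1 : ℂ) else 0)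
        0).rank = n + q := by
  have hcard : Fintype.card (Fin n ⊕ Fin q) = n + q := by simp
  rw [← hcard, rank_eq_card_width_iff_s8] at h ⊢
  refine fun v hv => h v (fromBlocks_zero₂₂_mulVec_eq_zero_of_ker_le _ _ _ _ (fun x hx => ?_) hv)
  rw [of_ite_val_eq_mulVec] at hx
  exact mulVec_eq_zero_of_forall_col_ne_zero C' fun j hj => congrFun hx ⟨j, hX j hj⟩
end

section
/- Let V be a finite set, r a binary relation on V (the edge relation of a finite directed graph), 'reach' its reflexive-transitive closure, and Y ⊆ V. Then every vertex of V reaches some element of Y if and only if for every vertex v whose strongly connected component is a sink (i.e., every w with reach v w also satisfies reach w v), there exists y ∈ Y with reach v y. Equivalently, every vertex of the digraph can reach Y if and only if every sink strongly connected component contains an element of Y. -/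
/-!
Reachability is a preorder, and on a finite vertex set its strict part is well founded, so
every vertex reaches a vertex that is maximal for reachability, i.e. one lying in a sink
strongly connected component. Hence covering the sink components suffices to cover
everything; the converse is trivial.
-/

namespace Relation

variable {V : Type*}

theorem wellFounded_strict_reflTransGen_swap [Finite V] (r : V → V → Prop) :
    WellFounded fun a b => ReflTransGen r b a ∧ ¬ ReflTransGen r a b :=
  haveI : IsTrans V fun a b => ReflTransGen r b a ∧ ¬ ReflTransGen r a b :=
    ⟨fun _ _ _ hab hbc => ⟨hbc.1.trans hab.1, fun hac => hbc.2 (hab.1.trans hac)⟩⟩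
  haveI : Std.Irrefl fun a b : V => ReflTransGen r b a ∧ ¬ ReflTransGen r a b :=
    ⟨fun _ h => h.2 h.1⟩
  Finite.wellFounded_of_trans_of_irrefl _

theorem exists_reflTransGen_sink [Finite V] (r : V → V → Prop) (v : V) :
    ∃ w, ReflTransGen r v w ∧ ∀ u, ReflTransGen r w u → ReflTransGen r u w := by
  obtain ⟨w, hvw, hmax⟩ :=
    (wellFounded_strict_reflTransGen_swap r).has_min {w | ReflTransGen r v w} ⟨v, .refl⟩
  exact ⟨w, hvw, fun u hwu => by_contra fun huw => hmax u (hvw.trans hwu) ⟨hwu, huw⟩⟩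

end Relation

/-- In a finite directed graph with edge relation `r`, every vertex can reach the set
`Y` if and only if every vertex `v` whose strongly connected component is a sink
(every vertex reachable from `v` can reach `v` back) can reach `Y`; equivalently, every
sink strongly connected component contains (a vertex that can reach) an element of
`Y`. -/
theorem reach_cover_iff_sink_SCC_cover (V : Type*) [Fintype V]
    (r : V → V → Prop) (Y : Set V) :
    (∀ v : V, ∃ y ∈ Y, Relation.ReflTransGen r v y) ↔
      (∀ v : V, (∀ w : V, Relation.ReflTransGen r v w → Relation.ReflTransGen r w v) →
        ∃ y ∈ Y, Relation.ReflTransGen r v y) := by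
  refine ⟨fun h v _ => h v, fun h v => ?_⟩
  obtain ⟨w, hvw, hw⟩ := Relation.exists_reflTransGen_sink r v
  obtain ⟨y, hy, hwy⟩ := h w hw
  exact ⟨y, hy, hvw.trans hwy⟩
end

section
/- Let V be a finite set and r a binary relation on V (the edge relation of a finite directed graph). Suppose Y ⊆ V has minimum cardinality among all sets Y′ ⊆ V such that every vertex of V reaches some element of Y′. Then the cardinality of Y equals the number of sink strongly connected components of the digraph, Y contains exactly one vertex from each sink strongly connected component, and every element of Y belongs to a sink strongly connected component. -/
/-!
Call a set `Y` a reach cover if every vertex reaches some element of `Y`. In a minimum reach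
cover no element reaches another one, since it could otherwise be dropped. Every vertex reaches
a sink vertex (a maximal element of the reachability preorder of the finite vertex set), and
every sink SCC meets every reach cover. Hence an element `y` of a minimum cover reaches a sink
vertex, which reaches an element of the cover, which must be `y` itself: so `y` lies in a sink
SCC, and `y ↦ scc y` is a bijection from a minimum cover onto the sink SCCs.
-/

namespace Relation

variable {V : Type*} (r : V → V → Prop)

def IsSink (v : V) : Prop := ∀ w, ReflTransGen r v w → ReflTransGen r w v

def scc (v : V) : Set V := {w | ReflTransGen r v w ∧ ReflTransGen r w v}

def IsReachCover (Y : Finset V) : Prop := ∀ v, ∃ y ∈ Y, ReflTransGen r v y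

def IsMinimumReachCover (Y : Finset V) : Prop :=
  IsReachCover r Y ∧ ∀ Y', IsReachCover r Y' → Y.card ≤ Y'.card

variable {r}

theorem IsSink.of_reflTransGen {v w : V} (hv : IsSink r v) (hvw : ReflTransGen r v w) :
    IsSink r w :=
  fun _ hwu => (hv _ (hvw.trans hwu)).trans hvw

theorem exists_isSink_of_finite [Finite V] (v : V) : ∃ w, ReflTransGen r v w ∧ IsSink r w := by
  let _ : Preorder V :=
    { le := ReflTransGen r, le_refl := fun _ => .refl, le_trans := fun _ _ _ => .trans }
  obtain ⟨w, hvw, -, hw⟩ := Finite.exists_le_maximal (p := fun _ : V => True) trivial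
  exact ⟨w, hvw, fun _ hwu => hw trivial hwu⟩

theorem scc_eq_of_mem {v w : V} (hw : w ∈ scc r v) : scc r w = scc r v := by
  ext u
  exact ⟨fun hu => ⟨hw.1.trans hu.1, hu.2.trans hw.2⟩,
    fun hu => ⟨hw.2.trans hu.1, hu.2.trans hw.1⟩⟩

theorem IsReachCover.exists_mem_scc {Y : Finset V} (hY : IsReachCover r Y) {v : V}
    (hv : IsSink r v) : ∃ y ∈ Y, y ∈ scc r v := by
  obtain ⟨y, hy, hvy⟩ := hY v
  exact ⟨y, hy, hvy, hv y hvy⟩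

theorem IsReachCover.erase [DecidableEq V] {Y : Finset V} (hY : IsReachCover r Y) {y₁ y₂ : V}
    (hy₂ : y₂ ∈ Y) (hne : y₁ ≠ y₂) (h₁₂ : ReflTransGen r y₁ y₂) :
    IsReachCover r (Y.erase y₁) := by
  intro v
  obtain ⟨y, hy, hvy⟩ := hY v
  by_cases hy₁ : y = y₁
  · subst hy₁
    exact ⟨y₂, Finset.mem_erase.mpr ⟨hne.symm, hy₂⟩, hvy.trans h₁₂⟩
  · exact ⟨y, Finset.mem_erase.mpr ⟨hy₁, hy⟩, hvy⟩

namespace IsMinimumReachCover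

variable {Y : Finset V} (hY : IsMinimumReachCover r Y)
include hY

theorem eq_of_reflTransGen {y₁ y₂ : V} (hy₁ : y₁ ∈ Y) (hy₂ : y₂ ∈ Y)
    (h₁₂ : ReflTransGen r y₁ y₂) : y₁ = y₂ := by
  classical
  by_contra hne
  have hle := hY.2 _ (hY.1.erase hy₂ hne h₁₂)
  rw [Finset.card_erase_of_mem hy₁] at hle
  have := Finset.card_pos.mpr ⟨y₁, hy₁⟩
  omega

theorem isSink_of_mem [Finite V] {y : V} (hy : y ∈ Y) : IsSink r y := by
  obtain ⟨w, hyw, hw⟩ := exists_isSink_of_finite (r := r) y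
  obtain ⟨y', hy', hwy', -⟩ := hY.1.exists_mem_scc hw
  obtain rfl := hY.eq_of_reflTransGen hy hy' (hyw.trans hwy')
  exact hw.of_reflTransGen hwy'

theorem existsUnique_mem_scc {v : V} (hv : IsSink r v) : ∃! y, y ∈ Y ∧ y ∈ scc r v := by
  obtain ⟨y, hy, hyv⟩ := hY.1.exists_mem_scc hv
  exact ⟨y, ⟨hy, hyv⟩, fun y' ⟨hy', hy'v⟩ => hY.eq_of_reflTransGen hy' hy (hy'v.2.trans hyv.1)⟩

theorem card_eq_nat_card_sink_scc [Finite V] :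
    Y.card = Nat.card {C : Set V // ∃ v, IsSink r v ∧ C = scc r v} := by
  let f : Y → {C : Set V // ∃ v, IsSink r v ∧ C = scc r v} :=
    fun y => ⟨scc r y, y, hY.isSink_of_mem y.2, rfl⟩
  have hf : Function.Bijective f := by
    constructor
    · rintro ⟨y₁, hy₁⟩ ⟨y₂, hy₂⟩ h
      have h₂ : y₂ ∈ scc r y₁ := by
        rw [show scc r y₁ = scc r y₂ from congrArg Subtype.val h]
        exact ⟨.refl, .refl⟩
      exact Subtype.ext (hY.eq_of_reflTransGen hy₁ hy₂ h₂.1)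
    · rintro ⟨C, v, hv, rfl⟩
      obtain ⟨y, hy, hyv⟩ := hY.1.exists_mem_scc hv
      exact ⟨⟨y, hy⟩, Subtype.ext (scc_eq_of_mem hyv)⟩
  rw [← Nat.card_eq_finsetCard]
  exact Nat.card_congr (Equiv.ofBijective f hf)

end IsMinimumReachCover

end Relation

open Relation in
theorem minimum_reach_cover_is_sink_SCC_transversal_general (V : Type*) [Fintype V]
    (r : V → V → Prop) (Y : Finset V)
    (hY : ∀ v : V, ∃ y ∈ Y, Relation.ReflTransGen r v y)
    (hmin : ∀ Y' : Finset V, (∀ v : V, ∃ y ∈ Y', Relation.ReflTransGen r v y) →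
      Y.card ≤ Y'.card) :
    Y.card = Nat.card {C : Set V // ∃ v : V,
        (∀ w : V, Relation.ReflTransGen r v w → Relation.ReflTransGen r w v) ∧
        C = {w : V | Relation.ReflTransGen r v w ∧ Relation.ReflTransGen r w v}} ∧
      (∀ v : V, (∀ w : V, Relation.ReflTransGen r v w → Relation.ReflTransGen r w v) →
        ∃! y : V, y ∈ Y ∧ Relation.ReflTransGen r v y ∧ Relation.ReflTransGen r y v) ∧
      (∀ y ∈ Y, ∀ w : V, Relation.ReflTransGen r y w → Relation.ReflTransGen r w y) := by
  have hY' : IsMinimumReachCover r Y := ⟨hY, hmin⟩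
  exact ⟨hY'.card_eq_nat_card_sink_scc, fun _ hv => hY'.existsUnique_mem_scc hv,
    fun _ hy => hY'.isSink_of_mem hy⟩

/-- If `Y` has minimum cardinality among all subsets of a finite digraph that every
vertex can reach, then `card Y` equals the number of sink strongly connected
components, `Y` contains exactly one vertex from each sink strongly connected
component, and every element of `Y` belongs to a sink strongly connected component. -/
theorem minimum_reach_cover_is_sink_SCC_transversal (V : Type*) [Fintype V]
    [DecidableEq V] (r : V → V → Prop) (Y : Finset V)
    (hY : ∀ v : V, ∃ y ∈ Y, Relation.ReflTransGen r v y)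
    (hmin : ∀ Y' : Finset V, (∀ v : V, ∃ y ∈ Y', Relation.ReflTransGen r v y) →
      Y.card ≤ Y'.card) :
    Y.card = Nat.card {C : Set V // ∃ v : V,
        (∀ w : V, Relation.ReflTransGen r v w → Relation.ReflTransGen r w v) ∧
        C = {w : V | Relation.ReflTransGen r v w ∧ Relation.ReflTransGen r w v}} ∧
      (∀ v : V, (∀ w : V, Relation.ReflTransGen r v w → Relation.ReflTransGen r w v) →
        ∃! y : V, y ∈ Y ∧ Relation.ReflTransGen r v y ∧ Relation.ReflTransGen r y v) ∧
      (∀ y ∈ Y, ∀ w : V, Relation.ReflTransGen r y w → Relation.ReflTransGen r w y) :=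
  minimum_reach_cover_is_sink_SCC_transversal_general V r Y hY hmin
end
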